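/- arXiv:1512.07251 — 9 statements merged into one kernel-verified Lean document; each statement's English description precedes it below -/
import Mathlib

section
/- Let n ≥ 1, r > 0 with r ≠ 1, and let q̄_i > 0 for i = 1,…,n. Let φ ∈ Δ^{n-1} satisfy p_i(φ) = φ_i for all i, where p_i(φ) = q̄_i φ_i^r / Σ_{j=1}^n q̄_j φ_j^r (with the convention 0^r = 0), and let Q = {i : φ_i ≠ 0} (which is nonempty). Then for every i ∈ Q, φ_i = q̄_i^{1/(1−r)} / Σ_{j∈Q} q̄_j^{1/(1−r)}, and φ_i = 0 for i ∉ Q. -/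
/-!
On the support of an equilibrium the fixed-point equation reads `q i * φ i ^ r = S * φ i` with
`S = ∑ j, q j * φ j ^ r > 0`, so `φ i ^ (1 - r) = q i / S` and `φ i = q i ^ (1/(1-r)) / S ^ (1/(1-r))`.
Since `φ` sums to `1` over its support, the constant `S ^ (1/(1-r))` is the normalising sum.
-/

open Finset

theorem Finset.eq_div_sum_of_eq_div_of_sum_eq_one {ι : Type*} {s : Finset ι} {f g : ι → ℝ}
    {c : ℝ} (h : ∀ i ∈ s, f i = g i / c) (hsum : ∑ i ∈ s, f i = 1) :
    ∀ i ∈ s, f i = g i / ∑ j ∈ s, g j := by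
  rw [sum_congr rfl h, ← sum_div] at hsum
  have hc : c ≠ 0 := by
    rintro rfl
    simp at hsum
  rw [(div_eq_one_iff_eq hc).mp hsum]
  exact h

theorem Real.eq_rpow_div_rpow_of_mul_rpow_div_eq {a S x r : ℝ} (ha : 0 ≤ a) (hS : 0 < S)
    (hx : 0 < x) (hr : r ≠ 1) (h : a * x ^ r / S = x) :
    x = a ^ (1 / (1 - r)) / S ^ (1 / (1 - r)) := by
  have hxr : 0 < x ^ r := Real.rpow_pos_of_pos hx r
  have hpow : x ^ (1 - r) = a / S := by
    rw [Real.rpow_sub hx, Real.rpow_one, div_eq_div_iff hxr.ne' hS.ne']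
    rw [div_eq_iff hS.ne'] at h
    linarith
  have h1r : 1 - r ≠ 0 := sub_ne_zero.mpr hr.symm
  calc x = (x ^ (1 - r)) ^ (1 / (1 - r)) := by
        rw [← Real.rpow_mul hx.le, mul_one_div_cancel h1r, Real.rpow_one]
    _ = a ^ (1 / (1 - r)) / S ^ (1 / (1 - r)) := by rw [hpow, Real.div_rpow ha hS.le]

theorem equilibrium_characterisation_general (n : ℕ)
    (r : ℝ) (hr1 : r ≠ 1)
    (q : Fin n → ℝ) (hq : ∀ i, 0 < q i)
    (φ : Fin n → ℝ) (hφ0 : ∀ i, 0 ≤ φ i) (hφ1 : ∑ i, φ i = 1)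
    (heq : ∀ i, q i * φ i ^ r / (∑ j, q j * φ j ^ r) = φ i)
    (Q : Finset (Fin n)) (hQ : ∀ i, i ∈ Q ↔ φ i ≠ 0) :
    Q.Nonempty ∧
    (∀ i ∈ Q, φ i = q i ^ (1 / (1 - r)) / ∑ j ∈ Q, q j ^ (1 / (1 - r))) ∧
    (∀ i ∉ Q, φ i = 0) := by
  have hQ_eq : Q = univ.filter (φ · ≠ 0) := by ext i; simp [hQ]
  have hsumQ : ∑ i ∈ Q, φ i = 1 := by rw [hQ_eq, sum_filter_ne_zero, hφ1]
  have hQne : Q.Nonempty := nonempty_of_sum_ne_zero (hsumQ ▸ one_ne_zero)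
  have hpos : ∀ i ∈ Q, 0 < φ i := fun i hi => (hφ0 i).lt_of_ne' ((hQ i).mp hi)
  obtain ⟨i₀, hi₀⟩ := hQne
  have hS : 0 < ∑ j, q j * φ j ^ r :=
    sum_pos' (fun j _ => mul_nonneg (hq j).le (Real.rpow_nonneg (hφ0 j) r))
      ⟨i₀, mem_univ _, mul_pos (hq i₀) (Real.rpow_pos_of_pos (hpos i₀ hi₀) r)⟩
  refine ⟨⟨i₀, hi₀⟩, eq_div_sum_of_eq_div_of_sum_eq_one
    (c := (∑ j, q j * φ j ^ r) ^ (1 / (1 - r))) (fun i hi => ?_) hsumQ, fun i hi => ?_⟩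
  · exact Real.eq_rpow_div_rpow_of_mul_rpow_div_eq (hq i).le hS (hpos i hi) hr1 (heq i)
  · simpa using mt (hQ i).mpr hi

/-- Any equilibrium `φ` of the trial-offer market dynamics with social signal
`f x = x ^ r` (`r > 0`, `r ≠ 1`) has coordinates
`φ i = q i ^ (1/(1-r)) / ∑ j ∈ Q, q j ^ (1/(1-r))` on its support
`Q = {i | φ i ≠ 0}`, and zero otherwise. -/
theorem equilibrium_characterisation (n : ℕ) (hn : 1 ≤ n)
    (r : ℝ) (hr : 0 < r) (hr1 : r ≠ 1)
    (q : Fin n → ℝ) (hq : ∀ i, 0 < q i)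
    (φ : Fin n → ℝ) (hφ0 : ∀ i, 0 ≤ φ i) (hφ1 : ∑ i, φ i = 1)
    (heq : ∀ i, q i * φ i ^ r / (∑ j, q j * φ j ^ r) = φ i)
    (Q : Finset (Fin n)) (hQ : ∀ i, i ∈ Q ↔ φ i ≠ 0) :
    Q.Nonempty ∧
    (∀ i ∈ Q, φ i = q i ^ (1 / (1 - r)) / ∑ j ∈ Q, q j ^ (1 / (1 - r))) ∧
    (∀ i ∉ Q, φ i = 0) :=
  equilibrium_characterisation_general n r hr1 q hq φ hφ0 hφ1 heq Q hQ
end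

section
/- Let n ≥ 1, r > 0 with r ≠ 1, let q̄_i > 0 for i = 1,…,n, and let Q ⊆ {1,…,n} be nonempty. Define φ ∈ ℝ^n by φ_i = q̄_i^{1/(1−r)} / Σ_{j∈Q} q̄_j^{1/(1−r)} for i ∈ Q and φ_i = 0 for i ∉ Q. Then φ ∈ Δ^{n-1} and φ is an equilibrium, i.e., p_i(φ) = φ_i for all i = 1,…,n, where p_i(φ) = q̄_i φ_i^r / Σ_{j=1}^n q̄_j φ_j^r (with 0^r = 0). -/
/-!
With `a = 1/(1-r)` one has `1 + a r = a`, so for `φ_i ∝ q_i ^ a` on `Q` the attractiveness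
`q_i φ_i ^ r` is a constant multiple of `φ_i` (and vanishes with `φ_i` off `Q`);
normalizing a vector proportional to `φ` gives back `φ`.
-/

open Finset

theorem one_add_inv_one_sub_mul {r : ℝ} (hr1 : r ≠ 1) : 1 + 1 / (1 - r) * r = 1 / (1 - r) := by
  have : (1 : ℝ) - r ≠ 0 := sub_ne_zero.mpr hr1.symm
  field_simp
  ring

theorem mul_rpow_inv_one_sub_rpow {x r : ℝ} (hx : 0 < x) (hr1 : r ≠ 1) :
    x * (x ^ (1 / (1 - r))) ^ r = x ^ (1 / (1 - r)) := by
  rw [← Real.rpow_mul hx.le]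
  nth_rw 1 [← Real.rpow_one x]
  rw [← Real.rpow_add hx, one_add_inv_one_sub_mul hr1]

section

variable {ι : Type*}

theorem div_sum_eq_of_eq_const_mul [Fintype ι] {g φ : ι → ℝ} {c : ℝ} (hc : c ≠ 0)
    (hφ : ∑ i, φ i = 1) (hg : ∀ i, g i = c * φ i) (i : ι) : g i / ∑ j, g j = φ i := by
  simp only [hg, ← mul_sum, hφ, mul_one]
  exact mul_div_cancel_left₀ (φ i) hc

variable [DecidableEq ι]

noncomputable def normalizeOn (Q : Finset ι) (w : ι → ℝ) (i : ι) : ℝ :=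
  if i ∈ Q then w i / ∑ j ∈ Q, w j else 0

theorem normalizeOn_nonneg {Q : Finset ι} {w : ι → ℝ} (hw : ∀ i ∈ Q, 0 ≤ w i) (i : ι) :
    0 ≤ normalizeOn Q w i := by
  unfold normalizeOn
  split_ifs with hi
  · exact div_nonneg (hw i hi) (sum_nonneg hw)
  · exact le_rfl

theorem sum_normalizeOn [Fintype ι] {Q : Finset ι} {w : ι → ℝ} (hw : ∑ j ∈ Q, w j ≠ 0) :
    ∑ i, normalizeOn Q w i = 1 := by
  simp only [normalizeOn, sum_ite_mem_eq, ← sum_div, div_self hw]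

theorem mul_normalizeOn_rpow_inv_one_sub {Q : Finset ι}
    {q : ι → ℝ} (hq : ∀ i, 0 < q i) {r : ℝ} (hr : r ≠ 0) (hr1 : r ≠ 1) (i : ι) :
    let s := ∑ j ∈ Q, q j ^ (1 / (1 - r))
    q i * normalizeOn Q (fun j => q j ^ (1 / (1 - r))) i ^ r =
      s / s ^ r * normalizeOn Q (fun j => q j ^ (1 / (1 - r))) i := by
  intro s
  unfold normalizeOn
  split_ifs with hi
  · have hw : ∀ j, 0 < q j ^ (1 / (1 - r)) := fun j => Real.rpow_pos_of_pos (hq j) _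
    have hs : 0 < s := sum_pos (fun j _ => hw j) ⟨i, hi⟩
    rw [Real.div_rpow (hw i).le hs.le, mul_div_assoc', mul_rpow_inv_one_sub_rpow (hq i) hr1,
      div_mul_div_comm, mul_comm s, mul_div_mul_right _ _ hs.ne']
  · rw [Real.zero_rpow hr, mul_zero, mul_zero]

end

theorem equilibrium_converse_general (n : ℕ)
    (r : ℝ) (hr : 0 < r) (hr1 : r ≠ 1)
    (q : Fin n → ℝ) (hq : ∀ i, 0 < q i)
    (Q : Finset (Fin n)) (hQ : Q.Nonempty)
    (φ : Fin n → ℝ)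
    (hφ : ∀ i, φ i =
      if i ∈ Q then q i ^ (1 / (1 - r)) / ∑ j ∈ Q, q j ^ (1 / (1 - r)) else 0) :
    (∀ i, 0 ≤ φ i) ∧ (∑ i, φ i = 1) ∧
    (∀ i, q i * φ i ^ r / (∑ j, q j * φ j ^ r) = φ i) := by
  obtain rfl : φ = normalizeOn Q (fun j => q j ^ (1 / (1 - r))) := funext hφ
  have hw : ∀ j, 0 < q j ^ (1 / (1 - r)) := fun j => Real.rpow_pos_of_pos (hq j) _
  have hs : 0 < ∑ j ∈ Q, q j ^ (1 / (1 - r)) := sum_pos (fun j _ => hw j) hQ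
  have hsum := sum_normalizeOn hs.ne'
  refine ⟨normalizeOn_nonneg fun j _ => (hw j).le, hsum,
    div_sum_eq_of_eq_const_mul ?_ hsum (mul_normalizeOn_rpow_inv_one_sub hq hr.ne' hr1)⟩
  exact div_ne_zero hs.ne' (Real.rpow_pos_of_pos hs r).ne'

/-- For any nonempty support `Q`, the vector with coordinates
`q i ^ (1/(1-r)) / ∑ j ∈ Q, q j ^ (1/(1-r))` on `Q` and `0` outside `Q`
lies in the simplex and is an equilibrium of the trial-offer market dynamics
with social signal `f x = x ^ r` (`r > 0`, `r ≠ 1`). -/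
theorem equilibrium_converse (n : ℕ) (hn : 1 ≤ n)
    (r : ℝ) (hr : 0 < r) (hr1 : r ≠ 1)
    (q : Fin n → ℝ) (hq : ∀ i, 0 < q i)
    (Q : Finset (Fin n)) (hQ : Q.Nonempty)
    (φ : Fin n → ℝ)
    (hφ : ∀ i, φ i =
      if i ∈ Q then q i ^ (1 / (1 - r)) / ∑ j ∈ Q, q j ^ (1 / (1 - r)) else 0) :
    (∀ i, 0 ≤ φ i) ∧ (∑ i, φ i = 1) ∧
    (∀ i, q i * φ i ^ r / (∑ j, q j * φ j ^ r) = φ i) :=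
  equilibrium_converse_general n r hr hr1 q hq Q hQ φ hφ
end

section
/- Let n ≥ 1, 0 < r < 1, and q̄_i > 0 for i = 1,…,n. Define φ* ∈ ℝ^n by φ*_i = q̄_i^{1/(1−r)} / Σ_{j=1}^n q̄_j^{1/(1−r)}. Then φ* is the unique equilibrium of p all of whose coordinates are strictly positive; moreover φ*_i > 0 for every i (so the equilibrium is not a monopoly), and whenever q̄_i ≥ q̄_j one has φ*_i ≥ φ*_j. -/
/-!
At a positive point `φ` the fixed-point equation `q i * φ i ^ r / D = φ i` (with `D` the common
denominator) says `φ i ^ (1 - r) = q i / D`, i.e. `φ i = q i ^ α / D ^ α` with `α = 1 / (1 - r)`.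
So every positive equilibrium is proportional to `q ^ α`, and the normalisation `∑ i, φ i = 1`
leaves only `φ* = q ^ α / ∑ j, q j ^ α`; conversely `φ*` satisfies the equation with
`D = (∑ j, q j ^ α) ^ (1 - r)`.
-/

namespace SocialSignal

variable {ι : Type*} [Fintype ι]

def IsEquilibrium (q : ι → ℝ) (r : ℝ) (φ : ι → ℝ) : Prop :=
  ∀ i, q i * φ i ^ r / ∑ j, q j * φ j ^ r = φ i

theorem isEquilibrium_iff {q φ : ι → ℝ} {r : ℝ} (hφ : ∑ i, φ i = 1) :
    IsEquilibrium q r φ ↔ ∃ K ≠ 0, ∀ i, q i * φ i ^ r = K * φ i := by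
  constructor
  · intro h
    have hD : ∑ j, q j * φ j ^ r ≠ 0 := by
      intro hD
      have hzero : ∀ i, φ i = 0 := fun i => by rw [← h i, hD, div_zero]
      simp [hzero] at hφ
    exact ⟨_, hD, fun i => by rw [(div_eq_iff hD).1 (h i), mul_comm]⟩
  · rintro ⟨K, hK, h⟩ i
    rw [Finset.sum_congr rfl fun j _ => h j, ← Finset.mul_sum, hφ, mul_one, h i,
      mul_div_cancel_left₀ _ hK]

theorem eq_div_sum_of_eq_div_const {w φ : ι → ℝ} {c : ℝ} (h : ∀ i, φ i = w i / c)
    (hφ : ∑ i, φ i = 1) (i : ι) : φ i = w i / ∑ j, w j := by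
  have hsum : (∑ j, w j) / c = 1 := by
    rw [Finset.sum_div, ← hφ]
    exact Finset.sum_congr rfl fun j _ => (h j).symm
  have hc : c ≠ 0 := by rintro rfl; simp at hsum
  rw [h i, (div_eq_one_iff_eq hc).1 hsum]

theorem mul_rpow_eq_mul_iff {q x K r : ℝ} (hq : 0 ≤ q) (hx : 0 < x) (hK : 0 < K) (hr : r ≠ 1) :
    q * x ^ r = K * x ↔ x = (q / K) ^ (1 - r)⁻¹ := by
  have hxr : 0 < x ^ r := Real.rpow_pos_of_pos hx r
  rw [eq_comm (a := x), Real.rpow_inv_eq (div_nonneg hq hK.le) hx.le (sub_ne_zero.2 hr.symm),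
    Real.rpow_sub hx, Real.rpow_one, div_eq_div_iff hK.ne' hxr.ne', mul_comm x K]

theorem sum_div_sum_eq_one {w : ι → ℝ} (hw : ∑ j, w j ≠ 0) : ∑ i, w i / ∑ j, w j = 1 := by
  rw [← Finset.sum_div, div_self hw]

theorem isEquilibrium_rpow_div_sum {q : ι → ℝ} {r : ℝ} (hq : ∀ i, 0 < q i) (hr : r ≠ 1)
    (hs : 0 < ∑ j, q j ^ (1 - r)⁻¹) :
    IsEquilibrium q r fun i => q i ^ (1 - r)⁻¹ / ∑ j, q j ^ (1 - r)⁻¹ := by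
  set s := ∑ j, q j ^ (1 - r)⁻¹
  refine (isEquilibrium_iff (sum_div_sum_eq_one hs.ne')).2
    ⟨s ^ (1 - r), (Real.rpow_pos_of_pos hs _).ne', fun i => ?_⟩
  refine (mul_rpow_eq_mul_iff (hq i).le (div_pos (Real.rpow_pos_of_pos (hq i) _) hs)
    (Real.rpow_pos_of_pos hs _) hr).2 ?_
  rw [Real.div_rpow (hq i).le (Real.rpow_nonneg hs.le _), ← Real.rpow_mul hs.le,
    mul_inv_cancel₀ (sub_ne_zero.2 hr.symm), Real.rpow_one]

theorem IsEquilibrium.eq_rpow_div_sum {q φ : ι → ℝ} {r : ℝ} (h : IsEquilibrium q r φ)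
    (hq : ∀ i, 0 ≤ q i) (hr : r ≠ 1) (hφpos : ∀ i, 0 < φ i) (hφ : ∑ i, φ i = 1) (i : ι) :
    φ i = q i ^ (1 - r)⁻¹ / ∑ j, q j ^ (1 - r)⁻¹ := by
  obtain ⟨K, hK, hKφ⟩ := (isEquilibrium_iff hφ).1 h
  have hKpos : 0 < K := by
    refine lt_of_le_of_ne (nonneg_of_mul_nonneg_left ?_ (hφpos i)) hK.symm
    rw [← hKφ i]
    exact mul_nonneg (hq i) (Real.rpow_nonneg (hφpos i).le r)
  refine eq_div_sum_of_eq_div_const (w := fun j => q j ^ (1 - r)⁻¹) (c := K ^ (1 - r)⁻¹)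
    (fun j => ?_) hφ i
  rw [← Real.div_rpow (hq j) hKpos.le]
  exact (mul_rpow_eq_mul_iff (hq j) (hφpos j) hKpos hr).1 (hKφ j)

end SocialSignal

open SocialSignal in
theorem inner_equilibrium_unique_general (n : ℕ) (hn : 1 ≤ n)
    (r : ℝ) (hr1 : r < 1)
    (q : Fin n → ℝ) (hq : ∀ i, 0 < q i)
    (φs : Fin n → ℝ)
    (hφs : ∀ i, φs i = q i ^ (1 / (1 - r)) / ∑ j, q j ^ (1 / (1 - r))) :
    ((∀ i, 0 ≤ φs i) ∧ (∑ i, φs i = 1) ∧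
      (∀ i, q i * φs i ^ r / (∑ j, q j * φs j ^ r) = φs i)) ∧
    (∀ φ : Fin n → ℝ, (∀ i, 0 < φ i) → (∑ i, φ i = 1) →
      (∀ i, q i * φ i ^ r / (∑ j, q j * φ j ^ r) = φ i) → φ = φs) ∧
    (∀ i, 0 < φs i) ∧
    (∀ i j, q j ≤ q i → φs j ≤ φs i) := by
  have : Nonempty (Fin n) := Fin.pos_iff_nonempty.mp hn
  simp only [one_div] at hφs
  obtain rfl : φs = fun i => q i ^ (1 - r)⁻¹ / ∑ j, q j ^ (1 - r)⁻¹ := funext hφs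
  have hs : 0 < ∑ j, q j ^ (1 - r)⁻¹ :=
    Finset.sum_pos (fun j _ => Real.rpow_pos_of_pos (hq j) _) Finset.univ_nonempty
  have hpos : ∀ i, 0 < q i ^ (1 - r)⁻¹ / ∑ j, q j ^ (1 - r)⁻¹ :=
    fun i => div_pos (Real.rpow_pos_of_pos (hq i) _) hs
  refine ⟨⟨fun i => (hpos i).le, sum_div_sum_eq_one hs.ne',
      isEquilibrium_rpow_div_sum hq hr1.ne hs⟩,
    fun φ hφpos hφ hφeq =>
      funext (IsEquilibrium.eq_rpow_div_sum hφeq (fun i => (hq i).le) hr1.ne hφpos hφ),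
    hpos, fun i j hij => ?_⟩
  have : 0 ≤ (1 - r)⁻¹ := inv_nonneg.2 (sub_nonneg.2 hr1.le)
  dsimp only
  gcongr
  exact (hq j).le

/-- For `0 < r < 1`, the point `φ*` with `φ*_i = q i ^ (1/(1-r)) / ∑ j, q j ^ (1/(1-r))`
is the unique equilibrium with all coordinates strictly positive; moreover all its
coordinates are strictly positive (no monopoly) and `q j ≤ q i → φ*_j ≤ φ*_i`. -/
theorem inner_equilibrium_unique (n : ℕ) (hn : 1 ≤ n)
    (r : ℝ) (hr0 : 0 < r) (hr1 : r < 1)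
    (q : Fin n → ℝ) (hq : ∀ i, 0 < q i)
    (φs : Fin n → ℝ)
    (hφs : ∀ i, φs i = q i ^ (1 / (1 - r)) / ∑ j, q j ^ (1 / (1 - r))) :
    ((∀ i, 0 ≤ φs i) ∧ (∑ i, φs i = 1) ∧
      (∀ i, q i * φs i ^ r / (∑ j, q j * φs j ^ r) = φs i)) ∧
    (∀ φ : Fin n → ℝ, (∀ i, 0 < φ i) → (∑ i, φ i = 1) →
      (∀ i, q i * φ i ^ r / (∑ j, q j * φ j ^ r) = φ i) → φ = φs) ∧
    (∀ i, 0 < φs i) ∧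
    (∀ i j, q j ≤ q i → φs j ≤ φs i) :=
  inner_equilibrium_unique_general n hn r hr1 q hq φs hφs
end

section
/- Let n ≥ 1, r > 0 with r ≠ 1, and q̄_i > 0 for i = 1,…,n. Let φ : [0,∞) → ℝ^n be differentiable with φ(t) ∈ Δ^{n-1} and φ_i(t) > 0 for all i and all t ≥ 0, satisfying the ordinary differential equation φ_i'(t) = p_i(φ(t)) − φ_i(t) for all i and t. Then for all i, j ∈ {1,…,n} and all t ≥ 0: φ_i(t)^{1−r}/q̄_i − φ_j(t)^{1−r}/q̄_j = e^{(r−1)t} [ φ_i(0)^{1−r}/q̄_i − φ_j(0)^{1−r}/q̄_j ]. -/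
/-!
With `S = ∑ j, q̄ⱼ φⱼ ^ r`, each `uₖ = φₖ ^ (1 - r) / q̄ₖ` satisfies `uₖ' = (1 - r) / S - (1 - r) uₖ`
along the flow. The inhomogeneous term `(1 - r) / S` is the same for every `k`, so it cancels in
`uᵢ - uⱼ`, which therefore solves the linear equation `D' = (r - 1) D`.
-/

open Real Set

theorem eq_exp_mul_of_hasDerivWithinAt_Ici {f : ℝ → ℝ} {a : ℝ}
    (hf : ∀ s, 0 ≤ s → HasDerivWithinAt f (a * f s) (Ici 0) s) (t : ℝ) (ht : 0 ≤ t) :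
    f t = exp (a * t) * f 0 := by
  set g : ℝ → ℝ := fun s => exp (-a * s) * f s
  have hg : ∀ s, 0 ≤ s → HasDerivWithinAt g 0 (Ici 0) s := fun s hs => by
    have hexp : HasDerivWithinAt (fun u => exp (-a * u)) (exp (-a * s) * -a) (Ici 0) s :=
      (((hasDerivAt_id s).const_mul (-a)).exp.hasDerivWithinAt).congr_deriv (by simp)
    exact (hexp.mul (hf s hs)).congr_deriv (by ring)
  have hconst : g t = g 0 :=
    constant_of_has_deriv_right_zero
      (fun s hs => (hg s hs.1).continuousWithinAt.mono fun _ hx => hx.1)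
      (fun s hs => (hg s hs.1).mono (Ici_subset_Ici.mpr hs.1)) t ⟨ht, le_rfl⟩
  calc f t = exp (a * t) * g t := by
        rw [← mul_assoc, ← exp_add, show a * t + -a * t = 0 by ring, exp_zero, one_mul]
    _ = exp (a * t) * f 0 := by rw [hconst]; simp [g]

theorem HasDerivWithinAt.rpow_one_sub_div {x : ℝ → ℝ} {s : Set ℝ} {t r q S : ℝ}
    (hx : HasDerivWithinAt x (q * x t ^ r / S - x t) s t) (hxt : 0 < x t) (hq : q ≠ 0)
    (hS : S ≠ 0) :
    HasDerivWithinAt (fun u => x u ^ (1 - r) / q)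
      ((1 - r) / S - (1 - r) * (x t ^ (1 - r) / q)) s t := by
  refine ((hx.rpow_const (p := 1 - r) (Or.inl hxt.ne')).div_const q).congr_deriv ?_
  have hpow_r : x t ^ (1 - r - 1) * x t ^ r = 1 := by
    rw [← rpow_add hxt, show 1 - r - 1 + r = 0 by ring, rpow_zero]
  have hpow_one : x t ^ (1 - r - 1) * x t = x t ^ (1 - r) := by
    rw [← rpow_add_one hxt.ne']; ring_nf
  field_simp
  linear_combination (1 - r) * q * hpow_r - (1 - r) * S * hpow_one

theorem ode_invariant_general (n : ℕ)
    (r : ℝ)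
    (q : Fin n → ℝ) (hq : ∀ i, 0 < q i)
    (φ : ℝ → Fin n → ℝ)
    (hpos : ∀ t, 0 ≤ t → ∀ i, 0 < φ t i)
    (hode : ∀ i, ∀ t, 0 ≤ t → HasDerivWithinAt (fun s => φ s i)
      (q i * φ t i ^ r / (∑ j, q j * φ t j ^ r) - φ t i) (Set.Ici 0) t) :
    ∀ i j, ∀ t, 0 ≤ t →
      φ t i ^ (1 - r) / q i - φ t j ^ (1 - r) / q j
        = Real.exp ((r - 1) * t) *
            (φ 0 i ^ (1 - r) / q i - φ 0 j ^ (1 - r) / q j) := by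
  intro i j
  refine eq_exp_mul_of_hasDerivWithinAt_Ici fun s hs => ?_
  have hS : ∑ k, q k * φ s k ^ r ≠ 0 :=
    (Finset.sum_pos (fun k _ => mul_pos (hq k) (rpow_pos_of_pos (hpos s hs k) r))
      ⟨i, Finset.mem_univ i⟩).ne'
  have hterm k := (hode k s hs).rpow_one_sub_div (hpos s hs k) (hq k).ne' hS
  exact ((hterm i).sub (hterm j)).congr_deriv (by ring)

/-- Along any positive solution of the mean-field ODE `φ' = p(φ) - φ` of the
trial-offer market with social signal `f x = x ^ r` (`r > 0`, `r ≠ 1`),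
`φ_i(t)^{1-r}/q̄_i - φ_j(t)^{1-r}/q̄_j = e^{(r-1)t} (φ_i(0)^{1-r}/q̄_i - φ_j(0)^{1-r}/q̄_j)`. -/
theorem ode_invariant (n : ℕ) (hn : 1 ≤ n)
    (r : ℝ) (hr0 : 0 < r) (hr1 : r ≠ 1)
    (q : Fin n → ℝ) (hq : ∀ i, 0 < q i)
    (φ : ℝ → Fin n → ℝ)
    (hpos : ∀ t, 0 ≤ t → ∀ i, 0 < φ t i)
    (hsum : ∀ t, 0 ≤ t → ∑ i, φ t i = 1)
    (hode : ∀ i, ∀ t, 0 ≤ t → HasDerivWithinAt (fun s => φ s i)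
      (q i * φ t i ^ r / (∑ j, q j * φ t j ^ r) - φ t i) (Set.Ici 0) t) :
    ∀ i j, ∀ t, 0 ≤ t →
      φ t i ^ (1 - r) / q i - φ t j ^ (1 - r) / q j
        = Real.exp ((r - 1) * t) *
            (φ 0 i ^ (1 - r) / q i - φ 0 j ^ (1 - r) / q j) :=
  ode_invariant_general n r q hq φ hpos hode
end

section
/- Let n ≥ 1, 0 < r < 1, and q̄_i > 0 for i = 1,…,n. Let φ : [0,∞) → ℝ^n be differentiable with φ(t) ∈ Δ^{n-1} and φ_i(t) > 0 for all i and all t ≥ 0, satisfying φ_i'(t) = p_i(φ(t)) − φ_i(t) for all i and t. Then φ(t) converges as t → ∞ to the inner equilibrium φ* given by φ*_i = q̄_i^{1/(1−r)} / Σ_{j=1}^n q̄_j^{1/(1−r)}. -/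
/-!
In the coordinates `ℓᵢ = log φᵢ - log q̄ᵢ / (1 - r) = log (φᵢ / q̄ᵢ ^ (1 / (1 - r)))` the ODE
reads `ℓᵢ' = exp ((r - 1) ℓᵢ) / D - 1` with `D = ∑ⱼ q̄ⱼ φⱼ ^ r ∈ (0, ∑ⱼ q̄ⱼ]`, and
`ℓᵢ ≤ -log q̄ᵢ / (1 - r)` since `φᵢ ≤ 1`. Because `x ↦ exp ((r - 1) x)` is decreasing with slope
bounded away from `0` on every half-line `(-∞, B]`, each difference `w = ℓⱼ - ℓᵢ` satisfies
`w w' ≤ -κ w²` for some `κ > 0`, so `w → 0` exponentially fast by Grönwall. Hence `φⱼ / φᵢ`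
tends to the equilibrium ratio, and `∑ φⱼ = 1` determines the limit of each `φᵢ`.
-/

open Filter Set Real Topology

theorem tendsto_zero_of_hasDerivWithinAt_le_neg_mul {f f' : ℝ → ℝ} {K a : ℝ} (hK : 0 < K)
    (hf : ∀ t ∈ Ici a, HasDerivWithinAt f (f' t) (Ici a) t)
    (hf0 : ∀ t ∈ Ici a, 0 ≤ f t) (hf' : ∀ t ∈ Ici a, f' t ≤ -K * f t) :
    Tendsto f atTop (𝓝 0) := by
  have hgronwall : ∀ t ∈ Ici a, f t ≤ f a * exp (-K * (t - a)) := by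
    intro t ht
    have := le_gronwallBound_of_liminf_deriv_right_le (K := -K) (ε := 0) (b := t)
      (fun x hx => (hf x hx.1).continuousWithinAt.mono Icc_subset_Ici_self)
      (fun x hx _ hr => ((hf x hx.1).mono (Ici_subset_Ici.2 hx.1)).liminf_right_slope_le hr)
      le_rfl (fun x hx => by rw [add_zero]; exact hf' x hx.1) t (right_mem_Icc.2 ht)
    rwa [gronwallBound_ε0] at this
  have hdecay : Tendsto (fun t => f a * exp (-K * (t - a))) atTop (𝓝 0) := by
    have : Tendsto (fun t => K * (t - a)) atTop atTop :=
      (tendsto_atTop_add_const_right _ _ tendsto_id).const_mul_atTop hK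
    simpa [neg_mul] using (tendsto_exp_neg_atTop_nhds_zero.comp this).const_mul (f a)
  exact tendsto_of_tendsto_of_tendsto_of_le_of_le' tendsto_const_nhds hdecay
    (eventually_ge_atTop a |>.mono hf0) (eventually_ge_atTop a |>.mono hgronwall)

theorem tendsto_zero_of_mul_hasDerivWithinAt_le_neg_mul_sq {w w' : ℝ → ℝ} {κ a : ℝ}
    (hκ : 0 < κ)
    (hw : ∀ t ∈ Ici a, HasDerivWithinAt w (w' t) (Ici a) t)
    (hw' : ∀ t ∈ Ici a, w t * w' t ≤ -κ * w t ^ 2) :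
    Tendsto w atTop (𝓝 0) := by
  have hsq : Tendsto (fun t => w t ^ 2) atTop (𝓝 0) :=
    tendsto_zero_of_hasDerivWithinAt_le_neg_mul (mul_pos two_pos hκ)
      (fun t ht => by simpa using (hw t ht).fun_pow 2) (fun t _ => sq_nonneg _)
      (fun t ht => by nlinarith [hw' t ht])
  refine (tendsto_zero_iff_abs_tendsto_zero w).2 ?_
  simpa [Function.comp_def, sqrt_sq_eq_abs] using hsq.sqrt

theorem mul_sub_exp_mul_le_of_le {s x y B : ℝ} (hs : s ≤ 0) (hyx : y ≤ x) (hxB : x ≤ B) :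
    (x - y) * (exp (s * x) - exp (s * y)) ≤ s * exp (s * B) * (x - y) ^ 2 := by
  have hconvex : exp (s * x) * (s * (y - x) + 1) ≤ exp (s * y) := by
    calc exp (s * x) * (s * (y - x) + 1) ≤ exp (s * x) * exp (s * (y - x)) := by
          gcongr; exact add_one_le_exp _
      _ = exp (s * y) := by rw [← exp_add]; ring_nf
  have hB : s * exp (s * x) ≤ s * exp (s * B) :=
    mul_le_mul_of_nonpos_left (exp_le_exp.2 (mul_le_mul_of_nonpos_left hxB hs)) hs
  nlinarith [sub_nonneg.2 hyx, mul_le_mul_of_nonneg_right hB (sq_nonneg (x - y))]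

theorem mul_sub_exp_mul_le {s x y B : ℝ} (hs : s ≤ 0) (hxB : x ≤ B) (hyB : y ≤ B) :
    (x - y) * (exp (s * x) - exp (s * y)) ≤ s * exp (s * B) * (x - y) ^ 2 := by
  rcases le_total y x with hyx | hxy
  · exact mul_sub_exp_mul_le_of_le hs hyx hxB
  · calc (x - y) * (exp (s * x) - exp (s * y)) = (y - x) * (exp (s * y) - exp (s * x)) := by ring
      _ ≤ s * exp (s * B) * (y - x) ^ 2 := mul_sub_exp_mul_le_of_le hs hxy hyB
      _ = s * exp (s * B) * (x - y) ^ 2 := by ring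

theorem tendsto_sub_of_hasDerivWithinAt_exp_div {u v D g : ℝ → ℝ} {s a B Q : ℝ}
    (hs : s < 0) (hQ : 0 < Q)
    (hu : ∀ t ∈ Ici a, HasDerivWithinAt u (exp (s * u t) / D t + g t) (Ici a) t)
    (hv : ∀ t ∈ Ici a, HasDerivWithinAt v (exp (s * v t) / D t + g t) (Ici a) t)
    (hD : ∀ t ∈ Ici a, 0 < D t) (hDQ : ∀ t ∈ Ici a, D t ≤ Q)
    (huB : ∀ t ∈ Ici a, u t ≤ B) (hvB : ∀ t ∈ Ici a, v t ≤ B) :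
    Tendsto (fun t => u t - v t) atTop (𝓝 0) := by
  refine tendsto_zero_of_mul_hasDerivWithinAt_le_neg_mul_sq
    (w' := fun t => (exp (s * u t) - exp (s * v t)) / D t)
    (div_pos (mul_pos (neg_pos.2 hs) (exp_pos (s * B))) hQ)
    (fun t ht => ((hu t ht).sub (hv t ht)).congr_deriv (by ring)) fun t ht => ?_
  have hmono := mul_sub_exp_mul_le hs.le (huB t ht) (hvB t ht)
  have hnonpos : s * exp (s * B) * (u t - v t) ^ 2 ≤ 0 :=
    mul_nonpos_of_nonpos_of_nonneg (mul_nonpos_of_nonpos_of_nonneg hs.le (exp_pos _).le)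
      (sq_nonneg _)
  calc (u t - v t) * ((exp (s * u t) - exp (s * v t)) / D t)
      ≤ s * exp (s * B) * (u t - v t) ^ 2 / D t := by
        rw [← mul_div_assoc]; exact div_le_div_of_nonneg_right hmono (hD t ht).le
    _ ≤ s * exp (s * B) * (u t - v t) ^ 2 / Q := by
        rw [div_le_div_iff₀ (hD t ht) hQ]; nlinarith [hDQ t ht, hnonpos]
    _ = -(-s * exp (s * B) / Q) * (u t - v t) ^ 2 := by ring

theorem mul_rpow_div_eq_exp {q x r : ℝ} (hq : 0 < q) (hx : 0 < x) (hr : r ≠ 1) :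
    q * x ^ r / x = exp ((r - 1) * (log x - log q / (1 - r))) := by
  have h1r : 1 - r ≠ 0 := sub_ne_zero.2 hr.symm
  rw [mul_div_assoc, ← rpow_sub_one hx.ne', rpow_def_of_pos hx, ← exp_log hq, ← exp_add, log_exp]
  congr 1
  field_simp
  ring

theorem le_one_of_sum_eq_one {ι : Type*} [Fintype ι] {x : ι → ℝ} (hx : ∀ i, 0 ≤ x i)
    (hx1 : ∑ i, x i = 1) (i : ι) : x i ≤ 1 :=
  hx1 ▸ Finset.single_le_sum (fun j _ => hx j) (Finset.mem_univ i)

theorem sum_mul_rpow_le_sum {ι : Type*} [Fintype ι] {q x : ι → ℝ} {r : ℝ} (hr : 0 ≤ r)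
    (hq : ∀ i, 0 ≤ q i) (hx : ∀ i, 0 ≤ x i) (hx1 : ∀ i, x i ≤ 1) :
    ∑ i, q i * x i ^ r ≤ ∑ i, q i :=
  Finset.sum_le_sum fun i _ => mul_le_of_le_one_right (hq i) (rpow_le_one (hx i) (hx1 i) hr)

theorem tendsto_of_sum_eq_one_of_tendsto_div {α ι : Type*} [Fintype ι] {l : Filter α}
    {x : α → ι → ℝ} {c : ι → ℝ} (hc : ∀ i, 0 < c i) (hx : ∀ᶠ t in l, ∑ i, x t i = 1)
    (hratio : ∀ i j, Tendsto (fun t => x t j / x t i) l (𝓝 (c j / c i))) (i : ι) :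
    Tendsto (fun t => x t i) l (𝓝 (c i / ∑ j, c j)) := by
  have hsum : Tendsto (fun t => ∑ j, x t j / x t i) l (𝓝 (∑ j, c j / c i)) :=
    tendsto_finsetSum _ fun j _ => hratio i j
  have hne : ∑ j, c j / c i ≠ 0 :=
    (Finset.sum_pos (fun j _ => div_pos (hc j) (hc i)) ⟨i, Finset.mem_univ i⟩).ne'
  rw [show c i / ∑ j, c j = (∑ j, c j / c i)⁻¹ by rw [← Finset.sum_div, inv_div]]
  -- `x t i = (∑ j, x t j / x t i)⁻¹` holds even at the junk value `x t i = 0`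
  refine (hsum.inv₀ hne).congr' (hx.mono fun t ht => ?_)
  rw [← Finset.sum_div, ht, one_div, inv_inv]

section TrialOffer

variable {n : ℕ} {r : ℝ} {q : Fin n → ℝ} {φ : ℝ → Fin n → ℝ}

theorem hasDerivWithinAt_log_sub_of_trialOffer (hr1 : r < 1) (hq : ∀ i, 0 < q i)
    (hpos : ∀ t, 0 ≤ t → ∀ i, 0 < φ t i)
    (hode : ∀ i, ∀ t, 0 ≤ t → HasDerivWithinAt (fun s => φ s i)
      (q i * φ t i ^ r / (∑ j, q j * φ t j ^ r) - φ t i) (Set.Ici 0) t)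
    (i : Fin n) {t : ℝ} (ht : t ∈ Ici 0) :
    HasDerivWithinAt (fun s => log (φ s i) - log (q i) / (1 - r))
      (exp ((r - 1) * (log (φ t i) - log (q i) / (1 - r))) / (∑ j, q j * φ t j ^ r) + -1)
      (Ici 0) t := by
  have hφ := hpos t ht i
  refine (((hode i t ht).log hφ.ne').sub_const _).congr_deriv ?_
  rw [← mul_rpow_div_eq_exp (hq i) hφ hr1.ne]
  field_simp
  ring

theorem tendsto_div_of_trialOffer (hr0 : 0 < r) (hr1 : r < 1) (hq : ∀ i, 0 < q i)
    (hpos : ∀ t, 0 ≤ t → ∀ i, 0 < φ t i)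
    (hsum : ∀ t, 0 ≤ t → ∑ i, φ t i = 1)
    (hode : ∀ i, ∀ t, 0 ≤ t → HasDerivWithinAt (fun s => φ s i)
      (q i * φ t i ^ r / (∑ j, q j * φ t j ^ r) - φ t i) (Set.Ici 0) t)
    (i j : Fin n) :
    Tendsto (fun t => φ t j / φ t i) atTop
      (𝓝 (q j ^ (1 / (1 - r)) / q i ^ (1 / (1 - r)))) := by
  have hle1 (t : ℝ) (ht : t ∈ Ici 0) : ∀ k, φ t k ≤ 1 :=
    le_one_of_sum_eq_one (fun k => (hpos t ht k).le) (hsum t ht)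
  have hlogle (k : Fin n) (t : ℝ) (ht : t ∈ Ici 0) :
      log (φ t k) - log (q k) / (1 - r) ≤ -(log (q k) / (1 - r)) := by
    linarith [log_nonpos (hpos t ht k).le (hle1 t ht k)]
  have hlog := tendsto_sub_of_hasDerivWithinAt_exp_div (sub_neg.2 hr1)
    (Finset.sum_pos (fun k _ => hq k) ⟨i, Finset.mem_univ i⟩)
    (fun t ht => hasDerivWithinAt_log_sub_of_trialOffer hr1 hq hpos hode j ht)
    (fun t ht => hasDerivWithinAt_log_sub_of_trialOffer hr1 hq hpos hode i ht)
    (fun t ht => Finset.sum_pos (fun k _ => mul_pos (hq k) (rpow_pos_of_pos (hpos t ht k) r))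
      ⟨i, Finset.mem_univ i⟩)
    (fun t ht => sum_mul_rpow_le_sum hr0.le (fun k => (hq k).le) (fun k => (hpos t ht k).le)
      (hle1 t ht))
    (fun t ht => (hlogle j t ht).trans (le_max_right _ _))
    (fun t ht => (hlogle i t ht).trans (le_max_left _ _))
  have hlim : q j ^ (1 / (1 - r)) / q i ^ (1 / (1 - r)) =
      exp (0 + (log (q j) / (1 - r) - log (q i) / (1 - r))) := by
    rw [rpow_def_of_pos (hq j), rpow_def_of_pos (hq i), ← exp_sub]
    ring_nf
  rw [hlim]
  refine (hlog.add_const _).rexp.congr' ((eventually_ge_atTop 0).mono fun t ht => ?_)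
  dsimp only
  rw [← exp_log (div_pos (hpos t ht j) (hpos t ht i)),
    log_div (hpos t ht j).ne' (hpos t ht i).ne']
  ring_nf

end TrialOffer

theorem ode_converges_to_inner_equilibrium_general (n : ℕ)
    (r : ℝ) (hr0 : 0 < r) (hr1 : r < 1)
    (q : Fin n → ℝ) (hq : ∀ i, 0 < q i)
    (φ : ℝ → Fin n → ℝ)
    (hpos : ∀ t, 0 ≤ t → ∀ i, 0 < φ t i)
    (hsum : ∀ t, 0 ≤ t → ∑ i, φ t i = 1)
    (hode : ∀ i, ∀ t, 0 ≤ t → HasDerivWithinAt (fun s => φ s i)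
      (q i * φ t i ^ r / (∑ j, q j * φ t j ^ r) - φ t i) (Set.Ici 0) t) :
    ∀ i, Tendsto (fun t => φ t i) atTop
      (nhds (q i ^ (1 / (1 - r)) / ∑ j, q j ^ (1 / (1 - r)))) :=
  tendsto_of_sum_eq_one_of_tendsto_div (fun i => rpow_pos_of_pos (hq i) _)
    ((eventually_ge_atTop 0).mono hsum) (tendsto_div_of_trialOffer hr0 hr1 hq hpos hsum hode)

/-- For `0 < r < 1`, any positive solution of the mean-field ODE `φ' = p(φ) - φ`
of the trial-offer market converges, as `t → ∞`, to the inner equilibrium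
`φ*_i = q̄_i^{1/(1-r)} / ∑_j q̄_j^{1/(1-r)}`. -/
theorem ode_converges_to_inner_equilibrium (n : ℕ) (hn : 1 ≤ n)
    (r : ℝ) (hr0 : 0 < r) (hr1 : r < 1)
    (q : Fin n → ℝ) (hq : ∀ i, 0 < q i)
    (φ : ℝ → Fin n → ℝ)
    (hpos : ∀ t, 0 ≤ t → ∀ i, 0 < φ t i)
    (hsum : ∀ t, 0 ≤ t → ∑ i, φ t i = 1)
    (hode : ∀ i, ∀ t, 0 ≤ t → HasDerivWithinAt (fun s => φ s i)
      (q i * φ t i ^ r / (∑ j, q j * φ t j ^ r) - φ t i) (Set.Ici 0) t) :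
    ∀ i, Tendsto (fun t => φ t i) atTop
      (nhds (q i ^ (1 / (1 - r)) / ∑ j, q j ^ (1 / (1 - r)))) :=
  ode_converges_to_inner_equilibrium_general n r hr0 hr1 q hq φ hpos hsum hode
end

section
/- Let n ≥ 2, r > 1, and q̄_i > 0 for i = 1,…,n. Let φ : [0,∞) → ℝ^n be differentiable with φ(t) ∈ Δ^{n-1} and φ_i(t) > 0 for all i and all t ≥ 0, satisfying φ_i'(t) = p_i(φ(t)) − φ_i(t) for all i and t. If two indices i ≠ j satisfy φ_i(0)^{1−r}/q̄_i > φ_j(0)^{1−r}/q̄_j, then φ_i(t) → 0 as t → ∞. -/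
open Filter Real Set

/-! For `r > 1` the substitution `u_k = φ_k^{1-r} / q̄_k` linearises the dynamics: every `u_k`
solves `u' = (r - 1)(u - 1/D)` with the same forcing `D = Σ_j q̄_j φ_j^r`. Hence `u_i - u_j`
grows like `e^{(r-1)t}`; as `u_j > 0`, `u_i → ∞`, i.e. `φ_i → 0`. -/

theorem HasDerivWithinAt.rpow_one_sub_div_s11 {f : ℝ → ℝ} {s : Set ℝ} {t r c D : ℝ}
    (hf : HasDerivWithinAt f (c * f t ^ r / D - f t) s t) (hpos : 0 < f t) (hc : c ≠ 0) :
    HasDerivWithinAt (fun x => f x ^ (1 - r) / c) ((r - 1) * (f t ^ (1 - r) / c - D⁻¹)) s t := by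
  have hderiv := ((hasDerivAt_rpow_const (p := 1 - r) (Or.inl hpos.ne')).comp_hasDerivWithinAt
    t hf).div_const c
  refine hderiv.congr_deriv ?_
  have hcancel : f t ^ (-r) * f t ^ r = 1 := by rw [← rpow_add hpos]; norm_num
  have hshift : f t ^ (-r) * f t = f t ^ (1 - r) := by
    rw [← rpow_add_one hpos.ne', neg_add_eq_sub]
  rw [show 1 - r - 1 = -r by ring]
  linear_combination -((r - 1) / D) * hcancel + ((r - 1) / c) * hshift -
    ((r - 1) / D * f t ^ (-r) * f t ^ r) * mul_inv_cancel₀ hc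

theorem eq_mul_exp_of_hasDerivWithinAt_Ici {V : ℝ → ℝ} {a : ℝ}
    (hV : ∀ t, 0 ≤ t → HasDerivWithinAt V (a * V t) (Ici 0) t) {t : ℝ} (ht : 0 ≤ t) :
    V t = V 0 * exp (a * t) := by
  -- `V e^{-a t}` has zero right derivative, hence is constant.
  have hderiv : ∀ s, 0 ≤ s → HasDerivWithinAt (fun x => V x * exp (-a * x)) 0 (Ici 0) s := by
    intro s hs
    have hexp : HasDerivAt (fun x => exp (-a * x)) (exp (-a * s) * -a) s := by
      simpa using ((hasDerivAt_id s).const_mul (-a)).exp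
    exact ((hV s hs).mul hexp.hasDerivWithinAt).congr_deriv (by ring)
  have hconst := constant_of_has_deriv_right_zero (a := 0) (b := t)
    (fun x hx => (hderiv x hx.1).continuousWithinAt.mono fun y hy => hy.1)
    (fun x hx => (hderiv x hx.1).mono (Ici_subset_Ici.mpr hx.1)) t ⟨ht, le_rfl⟩
  simp only [mul_zero, exp_zero, mul_one] at hconst
  rw [← hconst, mul_assoc, ← exp_add, neg_mul, neg_add_cancel, exp_zero, mul_one]

theorem tendsto_zero_of_tendsto_rpow_atTop {α : Type*} {l : Filter α} {f : α → ℝ} {a : ℝ}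
    (ha : a < 0) (hpos : ∀ᶠ x in l, 0 < f x) (h : Tendsto (fun x => f x ^ a) l atTop) :
    Tendsto f l (nhds 0) := by
  have hlim := (tendsto_rpow_neg_atTop (neg_pos.mpr (inv_lt_zero.mpr ha))).comp h
  rw [neg_neg] at hlim
  refine hlim.congr' ?_
  filter_upwards [hpos] with x hx
  exact rpow_rpow_inv hx.le ha.ne

theorem ode_superlinear_extinction_general (n : ℕ)
    (r : ℝ) (hr : 1 < r)
    (q : Fin n → ℝ) (hq : ∀ i, 0 < q i)
    (φ : ℝ → Fin n → ℝ)
    (hpos : ∀ t, 0 ≤ t → ∀ i, 0 < φ t i)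
    (hode : ∀ i, ∀ t, 0 ≤ t → HasDerivWithinAt (fun s => φ s i)
      (q i * φ t i ^ r / (∑ j, q j * φ t j ^ r) - φ t i) (Set.Ici 0) t)
    (i j : Fin n)
    (hinit : φ 0 j ^ (1 - r) / q j < φ 0 i ^ (1 - r) / q i) :
    Tendsto (fun t => φ t i) atTop (nhds 0) := by
  set u : Fin n → ℝ → ℝ := fun k t => φ t k ^ (1 - r) / q k with hu_def
  have hu : ∀ k t, 0 ≤ t → HasDerivWithinAt (u k)
      ((r - 1) * (u k t - (∑ j, q j * φ t j ^ r)⁻¹)) (Ici 0) t :=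
    fun k t ht => (hode k t ht).rpow_one_sub_div_s11 (hpos t ht k) (hq k).ne'
  have hgap : ∀ t, 0 ≤ t → u i t - u j t = (u i 0 - u j 0) * exp ((r - 1) * t) :=
    fun t => eq_mul_exp_of_hasDerivWithinAt_Ici fun s hs =>
      ((hu i s hs).sub (hu j s hs)).congr_deriv (by simp only [Pi.sub_apply]; ring)
  have hgap_tendsto : Tendsto (fun t => (u i 0 - u j 0) * exp ((r - 1) * t)) atTop atTop :=
    (tendsto_exp_atTop.comp (tendsto_id.const_mul_atTop (sub_pos.mpr hr))).const_mul_atTop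
      (sub_pos.mpr hinit)
  have hui : Tendsto (u i) atTop atTop := by
    refine tendsto_atTop_mono' atTop ?_ hgap_tendsto
    filter_upwards [eventually_ge_atTop 0] with t ht
    have huj : 0 < u j t := div_pos (rpow_pos_of_pos (hpos t ht j) _) (hq j)
    linarith [hgap t ht]
  refine tendsto_zero_of_tendsto_rpow_atTop (a := 1 - r) (by linarith)
    (eventually_ge_atTop 0 |>.mono fun t ht => hpos t ht i) ?_
  refine (hui.const_mul_atTop (hq i)).congr fun t => ?_
  simp only [hu_def, mul_div_cancel₀ _ (hq i).ne']

/-- For `r > 1`, along any positive solution of the mean-field ODE `φ' = p(φ) - φ`,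
if two indices `i ≠ j` satisfy `φ_i(0)^{1-r}/q̄_i > φ_j(0)^{1-r}/q̄_j`, then
`φ_i(t) → 0` as `t → ∞`. -/
theorem ode_superlinear_extinction (n : ℕ) (hn : 2 ≤ n)
    (r : ℝ) (hr : 1 < r)
    (q : Fin n → ℝ) (hq : ∀ i, 0 < q i)
    (φ : ℝ → Fin n → ℝ)
    (hpos : ∀ t, 0 ≤ t → ∀ i, 0 < φ t i)
    (hsum : ∀ t, 0 ≤ t → ∑ i, φ t i = 1)
    (hode : ∀ i, ∀ t, 0 ≤ t → HasDerivWithinAt (fun s => φ s i)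
      (q i * φ t i ^ r / (∑ j, q j * φ t j ^ r) - φ t i) (Set.Ici 0) t)
    (i j : Fin n) (hij : i ≠ j)
    (hinit : φ 0 j ^ (1 - r) / q j < φ 0 i ^ (1 - r) / q i) :
    Tendsto (fun t => φ t i) atTop (nhds 0) :=
  ode_superlinear_extinction_general n r hr q hq φ hpos hode i j hinit
end

section
/- Let n ≥ 1, r > 1, q̄_i > 0 for i = 1,…,n, let Q ⊆ {1,…,n} be nonempty, and let φ̄ ∈ Δ^{n-1} be the equilibrium with φ̄_i = q̄_i^{1/(1−r)} / Σ_{j∈Q} q̄_j^{1/(1−r)} for i ∈ Q and φ̄_i = 0 for i ∉ Q. Write F_i(x) = q̄_i x_i^r / Σ_{k=1}^n q̄_k x_k^r − x_i, and for each i let w^i ∈ ℝ^n be the direction with w^i_i = 1, w^i_k = −1 for k ∈ Q∖{i}, and w^i_k = 0 for k ∉ Q∪{i}; let D_i be the (one-sided, from s = 0⁺) derivative of s ↦ F_i(φ̄ + s w^i) at s = 0. Then D_i = −1 for i ∉ Q, D_i = r[1 + (|Q|−2) φ̄_i] − 1 for i ∈ Q, and Σ_{i=1}^n D_i = 2r(|Q|−1)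 − n. (These D_i are the diagonal entries of the Jacobian of F at φ̄ computed taking into account the simplex constraint, so the trace of this Jacobian equals 2r(|Q|−1) − n.) -/
/-!
At the equilibrium, `q k * φ k ^ (r - 1)` takes one common value `E` on `Q` and vanishes off `Q`
(because `r > 1`), so the normaliser `∑ k, q k * φ k ^ r` equals `E ∑_{k ∈ Q} φ k = E`. The quotient
rule then gives the derivative of `F_i` along any direction `v` in closed form:
`r (v i - φ i ∑_{k ∈ Q} v k) - v i` for `i ∈ Q` and `-v i` otherwise. For `v = w^i` one has
`v i = 1` and `∑_{k ∈ Q} v k = 2 - |Q|`, and summing over `i` uses `∑_{i ∈ Q} φ i = 1`.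
-/

open Finset

theorem hasDerivAt_add_mul (a v : ℝ) : HasDerivAt (fun s : ℝ => a + s * v) v 0 := by
  simpa using ((hasDerivAt_id (0 : ℝ)).mul_const v).const_add a

theorem hasDerivAt_rpow_add_mul {a v r : ℝ} (hr : 1 ≤ r) :
    HasDerivAt (fun s : ℝ => (a + s * v) ^ r) (v * r * a ^ (r - 1)) 0 := by
  simpa using (hasDerivAt_add_mul a v).rpow_const (Or.inr hr)

theorem mul_rpow_div_rpow_inv_one_sub {q S r : ℝ} (hq : 0 < q) (hS : 0 < S) (hr : r ≠ 1) :
    q * (q ^ (1 / (1 - r)) / S) ^ (r - 1) = S ^ (1 - r) := by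
  have h1r : 1 - r ≠ 0 := sub_ne_zero.mpr hr.symm
  have hexp : 1 / (1 - r) * (r - 1) = -1 := by field_simp; ring
  rw [Real.div_rpow (Real.rpow_nonneg hq.le _) hS.le, ← Real.rpow_mul hq.le, hexp,
    Real.rpow_neg_one, ← neg_sub r 1, Real.rpow_neg hS.le]
  field_simp

section Drift

variable {ι : Type*} [Fintype ι]

theorem hasDerivAt_drift_add_mul {q φ v : ι → ℝ} {r Z : ℝ} (hr : 1 ≤ r)
    (hZ : ∑ k, q k * φ k ^ r = Z) (hZ0 : Z ≠ 0) (i : ι) :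
    HasDerivAt
      (fun s : ℝ => q i * (φ i + s * v i) ^ r / ∑ k, q k * (φ k + s * v k) ^ r - (φ i + s * v i))
      ((q i * (v i * r * φ i ^ (r - 1)) * Z
          - q i * φ i ^ r * ∑ k, q k * (v k * r * φ k ^ (r - 1))) / Z ^ 2 - v i) 0 := by
  have hnum := (hasDerivAt_rpow_add_mul (a := φ i) (v := v i) hr).const_mul (q i)
  have hden : HasDerivAt (fun s : ℝ => ∑ k, q k * (φ k + s * v k) ^ r)
      (∑ k, q k * (v k * r * φ k ^ (r - 1))) 0 :=
    HasDerivAt.fun_sum fun k _ => (hasDerivAt_rpow_add_mul hr).const_mul (q k)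
  have := (hnum.div hden (by simpa [hZ] using hZ0)).sub (hasDerivAt_add_mul (φ i) (v i))
  simp only [zero_mul, add_zero, hZ] at this
  exact this

theorem hasDerivAt_drift_add_mul_of_equilibrium [DecidableEq ι] {q φ v : ι → ℝ} {r E : ℝ}
    {Q : Finset ι} (hr : 1 < r) (hφ_supp : ∀ k ∉ Q, φ k = 0) (hφ_sum : ∑ k ∈ Q, φ k = 1)
    (hE : ∀ k ∈ Q, q k * φ k ^ (r - 1) = E) (hE0 : E ≠ 0) (i : ι) :
    HasDerivAt
      (fun s : ℝ => q i * (φ i + s * v i) ^ r / ∑ k, q k * (φ k + s * v k) ^ r - (φ i + s * v i))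
      ((if i ∈ Q then r * (v i - φ i * ∑ k ∈ Q, v k) else 0) - v i) 0 := by
  have hr0 : r ≠ 0 := (zero_lt_one.trans hr).ne'
  have hr1 : r - 1 ≠ 0 := sub_ne_zero.mpr hr.ne'
  have hweight (k : ι) : q k * φ k ^ (r - 1) = if k ∈ Q then E else 0 := by
    split_ifs with hk
    · exact hE k hk
    · rw [hφ_supp k hk, Real.zero_rpow hr1, mul_zero]
  have hφ_ne (k : ι) (hk : k ∈ Q) : φ k ≠ 0 := by
    intro h
    apply hE0
    rw [← hE k hk, h, Real.zero_rpow hr1, mul_zero]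
  have hpow (k : ι) : q k * φ k ^ r = (if k ∈ Q then E else 0) * φ k := by
    rw [← hweight]
    by_cases hk : k ∈ Q
    · rw [Real.rpow_sub_one (hφ_ne k hk)]
      field_simp [hφ_ne k hk]
    · rw [hφ_supp k hk, Real.zero_rpow hr0, Real.zero_rpow hr1]
      simp
  have hZ : ∑ k, q k * φ k ^ r = E := by
    simp only [hpow, ite_mul, zero_mul, sum_ite_mem, univ_inter, ← mul_sum, hφ_sum, mul_one]
  convert hasDerivAt_drift_add_mul (v := v) hr.le hZ hE0 i using 1
  have hterm (k : ι) : q k * (v k * r * φ k ^ (r - 1)) = (q k * φ k ^ (r - 1)) * (r * v k) := by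
    ring
  simp only [hterm, hweight, hpow, ite_mul, zero_mul, sum_ite_mem, univ_inter, ← mul_sum]
  split_ifs with hi
  · field_simp
  · simp

end Drift

theorem sum_mem_ite_eq_sub_card {ι : Type*} [DecidableEq ι] {Q : Finset ι} {i : ι} (hi : i ∈ Q) :
    ∑ k ∈ Q, (if k = i then 1 else if k ∈ Q then -1 else 0 : ℝ) = 2 - #Q := by
  have h (k : ι) (hk : k ∈ Q) :
      (if k = i then 1 else if k ∈ Q then -1 else 0 : ℝ) = 2 * (if k = i then 1 else 0) - 1 := by
    split_ifs <;> norm_num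
  rw [sum_congr rfl h, sum_sub_distrib, ← mul_sum, sum_ite_eq' Q i, if_pos hi]
  simp only [sum_const, nsmul_eq_mul, mul_one]

theorem jacobian_trace_at_equilibrium_general (n : ℕ)
    (r : ℝ) (hr : 1 < r)
    (q : Fin n → ℝ) (hq : ∀ i, 0 < q i)
    (Q : Finset (Fin n)) (hQ : Q.Nonempty)
    (φ : Fin n → ℝ)
    (hφ : ∀ i, φ i =
      if i ∈ Q then q i ^ (1 / (1 - r)) / ∑ j ∈ Q, q j ^ (1 / (1 - r)) else 0)
    (F : Fin n → (Fin n → ℝ) → ℝ)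
    (hF : ∀ i x, F i x = q i * x i ^ r / (∑ k, q k * x k ^ r) - x i)
    (w : Fin n → Fin n → ℝ)
    (hw : ∀ i k, w i k = if k = i then 1 else if k ∈ Q then -1 else 0)
    (D : Fin n → ℝ)
    (hD : ∀ i, HasDerivWithinAt (fun s : ℝ => F i (fun k => φ k + s * w i k))
      (D i) (Set.Ici 0) 0) :
    (∀ i ∉ Q, D i = -1) ∧
    (∀ i ∈ Q, D i = r * (1 + ((Q.card : ℝ) - 2) * φ i) - 1) ∧
    (∑ i, D i = 2 * r * ((Q.card : ℝ) - 1) - n) := by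
  set S := ∑ j ∈ Q, q j ^ (1 / (1 - r))
  have hS : 0 < S := sum_pos (fun j _ => Real.rpow_pos_of_pos (hq j) _) hQ
  have hφ_supp (k : Fin n) (hk : k ∉ Q) : φ k = 0 := by rw [hφ, if_neg hk]
  have hφ_sum : ∑ k ∈ Q, φ k = 1 := by
    rw [sum_congr rfl fun k hk => by rw [hφ, if_pos hk], ← sum_div, div_self hS.ne']
  have hweight (k : Fin n) (hk : k ∈ Q) : q k * φ k ^ (r - 1) = S ^ (1 - r) := by
    rw [hφ, if_pos hk, mul_rpow_div_rpow_inv_one_sub (hq k) hS hr.ne']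
  have hDi (i : Fin n) : D i = (if i ∈ Q then r * (1 - φ i * (2 - #Q)) else 0) - 1 := by
    have hG := hasDerivAt_drift_add_mul_of_equilibrium (v := w i) hr hφ_supp hφ_sum hweight
      (Real.rpow_pos_of_pos hS _).ne' i
    have hDi := hD i
    simp only [hF] at hDi
    rw [(uniqueDiffWithinAt_Ici 0).eq_deriv _ hDi hG.hasDerivWithinAt, hw i i, if_pos rfl]
    split_ifs with hi
    · rw [sum_congr rfl fun k _ => hw i k, sum_mem_ite_eq_sub_card hi]
    · rfl
  refine ⟨fun i hi => by rw [hDi, if_neg hi]; ring, fun i hi => by rw [hDi, if_pos hi]; ring, ?_⟩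
  simp only [hDi, sum_sub_distrib, sum_ite_mem, univ_inter, sum_const, card_univ, Fintype.card_fin,
    ← mul_sum, ← sum_mul, hφ_sum, nsmul_eq_mul, mul_one]
  ring

/-- Diagonal entries (within the simplex) of the Jacobian of the drift
`F_i(x) = q̄_i x_i^r / ∑_k q̄_k x_k^r - x_i` at the equilibrium supported on `Q`:
`D_i = -1` for `i ∉ Q`, `D_i = r (1 + (|Q| - 2) φ̄_i) - 1` for `i ∈ Q`, and
`∑ D_i = 2 r (|Q| - 1) - n` (the trace of the Jacobian). -/
theorem jacobian_trace_at_equilibrium (n : ℕ) (hn : 1 ≤ n)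
    (r : ℝ) (hr : 1 < r)
    (q : Fin n → ℝ) (hq : ∀ i, 0 < q i)
    (Q : Finset (Fin n)) (hQ : Q.Nonempty)
    (φ : Fin n → ℝ)
    (hφ : ∀ i, φ i =
      if i ∈ Q then q i ^ (1 / (1 - r)) / ∑ j ∈ Q, q j ^ (1 / (1 - r)) else 0)
    (F : Fin n → (Fin n → ℝ) → ℝ)
    (hF : ∀ i x, F i x = q i * x i ^ r / (∑ k, q k * x k ^ r) - x i)
    (w : Fin n → Fin n → ℝ)
    (hw : ∀ i k, w i k = if k = i then 1 else if k ∈ Q then -1 else 0)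
    (D : Fin n → ℝ)
    (hD : ∀ i, HasDerivWithinAt (fun s : ℝ => F i (fun k => φ k + s * w i k))
      (D i) (Set.Ici 0) 0) :
    (∀ i ∉ Q, D i = -1) ∧
    (∀ i ∈ Q, D i = r * (1 + ((Q.card : ℝ) - 2) * φ i) - 1) ∧
    (∑ i, D i = 2 * r * ((Q.card : ℝ) - 1) - n) :=
  jacobian_trace_at_equilibrium_general n r hr q hq Q hQ φ hφ F hF w hw D hD
end

section
/- Let n ≥ 1, r > 0 with r ≠ 1, and q̄_i > 0 for i = 1,…,n, and let φ* be the inner equilibrium with φ*_i = q̄_i^{1/(1−r)} / Σ_{j=1}^n q̄_j^{1/(1−r)}. Write F_i(x) = q̄_i x_i^r / Σ_{k=1}^n q̄_k x_k^r − x_i, and for each i let D_i be the derivative at s = 0 of s ↦ F_i(φ* + s w^i), where w^i ∈ ℝ^n has w^i_i = 1 and w^i_k = −1 for all k ≠ i. Then D_i = r[1 + (n−2) φ*_i] − 1 for every i, and Σ_{i=1}^n D_i = 2r(n−1) − n. -/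
/-! The inner equilibrium is the point of the simplex at which `q̄_k φ_k^(r-1)` equals one
constant `c` for all `k`. There `q̄_k φ_k^r = c φ_k`, so the normaliser `∑ q̄_k φ_k^r` is `c`, and
differentiating the quotient along a direction `v` gives the Jacobian `r (I - φ* 𝟙ᵀ) - I`.
For `v = w^i` one has `∑_k w^i_k = 2 - n`; summing over `i` uses `∑ φ*_i = 1`. -/

open Finset

namespace TrialOffer

variable {ι : Type*} [Fintype ι]

noncomputable def innerEquilibrium (q : ι → ℝ) (r : ℝ) (i : ι) : ℝ :=
  q i ^ (1 / (1 - r)) / ∑ j, q j ^ (1 / (1 - r))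

noncomputable def drift (q : ι → ℝ) (r : ℝ) (x : ι → ℝ) (i : ι) : ℝ :=
  q i * x i ^ r / (∑ k, q k * x k ^ r) - x i

lemma sum_rpow_pos {q : ι → ℝ} (hq : ∀ i, 0 < q i) [Nonempty ι] (a : ℝ) :
    0 < ∑ j, q j ^ a :=
  sum_pos (fun j _ => Real.rpow_pos_of_pos (hq j) a) univ_nonempty

lemma innerEquilibrium_pos {q : ι → ℝ} (hq : ∀ i, 0 < q i) (r : ℝ) (i : ι) :
    0 < innerEquilibrium q r i :=
  have : Nonempty ι := ⟨i⟩
  div_pos (Real.rpow_pos_of_pos (hq i) _) (sum_rpow_pos hq _)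

lemma sum_innerEquilibrium [Nonempty ι] {q : ι → ℝ} (hq : ∀ i, 0 < q i) (r : ℝ) :
    ∑ i, innerEquilibrium q r i = 1 := by
  simp only [innerEquilibrium, ← sum_div]
  exact div_self (sum_rpow_pos hq _).ne'

lemma mul_innerEquilibrium_rpow_sub_one {q : ι → ℝ} (hq : ∀ i, 0 < q i) {r : ℝ} (hr : r ≠ 1)
    (i : ι) :
    q i * innerEquilibrium q r i ^ (r - 1) = (∑ j, q j ^ (1 / (1 - r))) ^ (1 - r) := by
  have : Nonempty ι := ⟨i⟩
  have hS := sum_rpow_pos hq (1 / (1 - r))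
  have hr' : 1 - r ≠ 0 := sub_ne_zero.mpr hr.symm
  rw [innerEquilibrium, Real.div_rpow (Real.rpow_pos_of_pos (hq i) _).le hS.le,
    ← Real.rpow_mul (hq i).le, show 1 / (1 - r) * (r - 1) = -1 by field_simp; ring,
    Real.rpow_neg_one, ← neg_sub 1 r, Real.rpow_neg hS.le]
  field_simp [(hq i).ne']

lemma hasDerivAt_rpow_affine {x : ℝ} (hx : 0 < x) (r v : ℝ) :
    HasDerivAt (fun s : ℝ => (x + s * v) ^ r) (r * x ^ (r - 1) * v) 0 := by
  have h := (((hasDerivAt_id (0 : ℝ)).mul_const v).const_add x).rpow_const (p := r)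
    (Or.inl (by simpa using hx.ne'))
  convert h using 1 <;> simp; ring

lemma hasDerivAt_drift_line {q x : ι → ℝ} {r c : ℝ} (hx : ∀ k, 0 < x k) (hc : c ≠ 0)
    (hqx : ∀ k, q k * x k ^ (r - 1) = c) (hsum : ∑ k, x k = 1) (v : ι → ℝ) (i : ι) :
    HasDerivAt (fun s : ℝ => drift q r (fun k => x k + s * v k) i)
      (r * (v i - x i * ∑ k, v k) - v i) 0 := by
  have hqxr : ∀ k, q k * x k ^ r = c * x k := fun k => by
    rw [← hqx k, Real.rpow_sub_one (hx k).ne']; field_simp [(hx k).ne']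
  have hterm : ∀ k, HasDerivAt (fun s : ℝ => q k * (x k + s * v k) ^ r) (r * c * v k) 0 :=
    fun k => ((hasDerivAt_rpow_affine (hx k) r (v k)).const_mul (q k)).congr_deriv <| by
      rw [← hqx k]; ring
  have hden : HasDerivAt (fun s : ℝ => ∑ k, q k * (x k + s * v k) ^ r) (∑ k, r * c * v k) 0 :=
    HasDerivAt.fun_sum fun k _ => hterm k
  have hden0 : ∑ k, q k * (x k + 0 * v k) ^ r = c := by
    simp only [zero_mul, add_zero, hqxr, ← mul_sum, hsum, mul_one]
  have hline : HasDerivAt (fun s : ℝ => x i + s * v i) (v i) 0 := by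
    simpa using ((hasDerivAt_id (0 : ℝ)).mul_const (v i)).const_add (x i)
  refine (((hterm i).div hden (hden0 ▸ hc)).sub hline).congr_deriv ?_
  rw [hden0, ← mul_sum, zero_mul, add_zero, hqxr]
  field_simp

end TrialOffer

open TrialOffer

theorem jacobian_trace_at_inner_equilibrium_general (n : ℕ) (hn : 1 ≤ n)
    (r : ℝ) (hr1 : r ≠ 1)
    (q : Fin n → ℝ) (hq : ∀ i, 0 < q i)
    (φs : Fin n → ℝ)
    (hφs : ∀ i, φs i = q i ^ (1 / (1 - r)) / ∑ j, q j ^ (1 / (1 - r)))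
    (F : Fin n → (Fin n → ℝ) → ℝ)
    (hF : ∀ i x, F i x = q i * x i ^ r / (∑ k, q k * x k ^ r) - x i)
    (w : Fin n → Fin n → ℝ)
    (hw : ∀ i k, w i k = if k = i then 1 else -1)
    (D : Fin n → ℝ)
    (hD : ∀ i, HasDerivAt (fun s : ℝ => F i (fun k => φs k + s * w i k)) (D i) 0) :
    (∀ i, D i = r * (1 + ((n : ℝ) - 2) * φs i) - 1) ∧
    (∑ i, D i = 2 * r * ((n : ℝ) - 1) - n) := by
  have : Nonempty (Fin n) := ⟨⟨0, hn⟩⟩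
  obtain rfl : φs = innerEquilibrium q r := funext hφs
  obtain rfl : F = fun i x => drift q r x i := funext₂ hF
  have hsum := sum_innerEquilibrium hq r
  have hw_sum : ∀ i, ∑ k, w i k = 2 - n := fun i => by
    simp [hw, sum_ite, filter_eq', filter_ne', Nat.cast_sub hn]
    ring
  have hDi : ∀ i, D i = r * (1 + ((n : ℝ) - 2) * innerEquilibrium q r i) - 1 := fun i => by
    have hc := (Real.rpow_pos_of_pos (sum_rpow_pos hq (1 / (1 - r))) (1 - r)).ne'
    rw [(hD i).unique (hasDerivAt_drift_line (innerEquilibrium_pos hq r) hc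
      (mul_innerEquilibrium_rpow_sub_one hq hr1) hsum (w i) i), hw_sum, hw, if_pos rfl]
    ring
  refine ⟨hDi, ?_⟩
  simp only [hDi, sum_sub_distrib, ← mul_sum, sum_add_distrib, hsum, sum_const, card_univ,
    Fintype.card_fin, nsmul_eq_mul]
  ring

/-- Diagonal entries (within the simplex) of the Jacobian of the drift
`F_i(x) = q̄_i x_i^r / ∑_k q̄_k x_k^r - x_i` at the inner equilibrium `φ*`:
`D_i = r (1 + (n - 2) φ*_i) - 1` for each `i`, and `∑ D_i = 2 r (n - 1) - n`. -/
theorem jacobian_trace_at_inner_equilibrium (n : ℕ) (hn : 1 ≤ n)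
    (r : ℝ) (hr0 : 0 < r) (hr1 : r ≠ 1)
    (q : Fin n → ℝ) (hq : ∀ i, 0 < q i)
    (φs : Fin n → ℝ)
    (hφs : ∀ i, φs i = q i ^ (1 / (1 - r)) / ∑ j, q j ^ (1 / (1 - r)))
    (F : Fin n → (Fin n → ℝ) → ℝ)
    (hF : ∀ i x, F i x = q i * x i ^ r / (∑ k, q k * x k ^ r) - x i)
    (w : Fin n → Fin n → ℝ)
    (hw : ∀ i k, w i k = if k = i then 1 else -1)
    (D : Fin n → ℝ)
    (hD : ∀ i, HasDerivAt (fun s : ℝ => F i (fun k => φs k + s * w i k)) (D i) 0) :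
    (∀ i, D i = r * (1 + ((n : ℝ) - 2) * φs i) - 1) ∧
    (∑ i, D i = 2 * r * ((n : ℝ) - 1) - n) :=
  jacobian_trace_at_inner_equilibrium_general n hn r hr1 q hq φs hφs F hF w hw D hD
end

section
/- For sublinear social signals the quality ranking need not be asymptotically optimal: there exist qualities q₁ ≥ q₂ ≥ q₃ > 0 and visibilities v₁ ≥ v₂ ≥ v₃ > 0 and r ∈ (0,1) such that swapping the positions of products 2 and 3 yields a strictly larger expected number of purchases at equilibrium. Concretely, for q₁ = 1, q₂ = 0.261, q₃ = 0.002, v₁ = 1, v₂ = 0.720, v₃ = 0.229, and r = 0.3, one has (1 + (0.720·0.261)^{10/7} + (0.229·0.002)^{10/7}) / (1 + 0.720·(0.720·0.261)^{3/7} + 0.229·(0.229·0.002)^{3/7}) < (1 + (0.720·0.002)^{10/7} + (0.229·0.261)^{10/7}) / (1 + 0.720·(0.720·0.002)^{3/7} + 0.229·(0.229·0.261)^{3/7}). -/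
/-!
With `r = 0.3` the exponent is `r / (1 - r) = 3/7`, and each side is the weighted mean of the
qualities with weights `vᵢ (vᵢ qᵢ)^{3/7}`. Under the quality ranking product 2 carries weight
`0.72 · (0.72 · 0.261)^{3/7} ≥ 0.72 · 0.4`, which drags the mean below `0.85`; after the swap
the weights of products 2 and 3 are at most `0.229 · 0.31` and `0.72 · 0.07`, so the mean stays
above `0.85`. The bounds on the `3/7`-th powers are checked by raising them to the 7th power.
-/

namespace Real

variable {x a : ℝ}

lemma rpow_natCast_div_pow (hx : 0 ≤ x) (m : ℕ) {n : ℕ} (hn : n ≠ 0) :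
    (x ^ ((m : ℝ) / n)) ^ n = x ^ m := by
  rw [← rpow_mul_natCast hx, div_mul_cancel₀ _ (Nat.cast_ne_zero.mpr hn), rpow_natCast]

lemma le_rpow_natCast_div_iff (hx : 0 ≤ x) (ha : 0 ≤ a) (m : ℕ) {n : ℕ} (hn : n ≠ 0) :
    a ≤ x ^ ((m : ℝ) / n) ↔ a ^ n ≤ x ^ m := by
  rw [← rpow_natCast_div_pow hx m hn, pow_le_pow_iff_left₀ ha (rpow_nonneg hx _) hn]

lemma rpow_natCast_div_le_iff (hx : 0 ≤ x) (ha : 0 ≤ a) (m : ℕ) {n : ℕ} (hn : n ≠ 0) :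
    x ^ ((m : ℝ) / n) ≤ a ↔ x ^ m ≤ a ^ n := by
  rw [← rpow_natCast_div_pow hx m hn, pow_le_pow_iff_left₀ (rpow_nonneg hx _) ha hn]

end Real

/-- For sublinear social signals the quality ranking need not be asymptotically
optimal: with `q₁ = 1 ≥ q₂ = 0.261 ≥ q₃ = 0.002 > 0`, `v₁ = 1 ≥ v₂ = 0.720 ≥
v₃ = 0.229 > 0` and `r = 0.3`, swapping the positions of products 2 and 3 yields a
strictly larger expected number of purchases per period at equilibrium. -/
theorem quality_ranking_not_optimal_sublinear :
    ∃ q₁ q₂ q₃ v₁ v₂ v₃ r : ℝ,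
      q₁ = 1 ∧ q₂ = 0.261 ∧ q₃ = 0.002 ∧
      v₁ = 1 ∧ v₂ = 0.720 ∧ v₃ = 0.229 ∧ r = 0.3 ∧
      q₂ ≤ q₁ ∧ q₃ ≤ q₂ ∧ 0 < q₃ ∧ v₂ ≤ v₁ ∧ v₃ ≤ v₂ ∧ 0 < v₃ ∧ 0 < r ∧ r < 1 ∧
      (v₁ * q₁ * (v₁ * q₁) ^ (r / (1 - r)) + v₂ * q₂ * (v₂ * q₂) ^ (r / (1 - r)) +
            v₃ * q₃ * (v₃ * q₃) ^ (r / (1 - r))) /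
          (v₁ * (v₁ * q₁) ^ (r / (1 - r)) + v₂ * (v₂ * q₂) ^ (r / (1 - r)) +
            v₃ * (v₃ * q₃) ^ (r / (1 - r)))
        < (v₁ * q₁ * (v₁ * q₁) ^ (r / (1 - r)) + v₂ * q₃ * (v₂ * q₃) ^ (r / (1 - r)) +
            v₃ * q₂ * (v₃ * q₂) ^ (r / (1 - r))) /
          (v₁ * (v₁ * q₁) ^ (r / (1 - r)) + v₂ * (v₂ * q₃) ^ (r / (1 - r)) +
            v₃ * (v₃ * q₂) ^ (r / (1 - r))) := by
  refine ⟨1, 0.261, 0.002, 1, 0.720, 0.229, 0.3, rfl, rfl, rfl, rfl, rfl, rfl, rfl,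
    by norm_num, by norm_num, by norm_num, by norm_num, by norm_num, by norm_num,
    by norm_num, by norm_num, ?_⟩
  have hexp : (0.3 : ℝ) / (1 - 0.3) = (3 : ℕ) / (7 : ℕ) := by norm_num
  simp only [hexp, mul_one, Real.one_rpow]
  have hA : 0.4 ≤ (0.720 * 0.261 : ℝ) ^ ((3 : ℕ) / (7 : ℕ) : ℝ) :=
    (Real.le_rpow_natCast_div_iff (by norm_num) (by norm_num) 3 (by norm_num)).2 (by norm_num)
  have hC : (0.720 * 0.002 : ℝ) ^ ((3 : ℕ) / (7 : ℕ) : ℝ) ≤ 0.07 :=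
    (Real.rpow_natCast_div_le_iff (by norm_num) (by norm_num) 3 (by norm_num)).2 (by norm_num)
  have hE : (0.229 * 0.261 : ℝ) ^ ((3 : ℕ) / (7 : ℕ) : ℝ) ≤ 0.31 :=
    (Real.rpow_natCast_div_le_iff (by norm_num) (by norm_num) 3 (by norm_num)).2 (by norm_num)
  have hB : 0 ≤ (0.229 * 0.002 : ℝ) ^ ((3 : ℕ) / (7 : ℕ) : ℝ) :=
    Real.rpow_nonneg (by norm_num) _
  have hC₀ : 0 ≤ (0.720 * 0.002 : ℝ) ^ ((3 : ℕ) / (7 : ℕ) : ℝ) :=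
    Real.rpow_nonneg (by norm_num) _
  have hE₀ : 0 ≤ (0.229 * 0.261 : ℝ) ^ ((3 : ℕ) / (7 : ℕ) : ℝ) :=
    Real.rpow_nonneg (by norm_num) _
  calc _ < (0.85 : ℝ) := by rw [div_lt_iff₀ (by positivity)]; linarith
    _ < _ := by rw [lt_div_iff₀ (by positivity)]; linarith
end
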